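/- arXiv:1309.5082 — 4 statements merged into one kernel-verified Lean document; each statement's English description precedes it below -/
import Mathlib

section
/- Let R = k[x_0,…,x_n] be a polynomial ring over a field k and let I ⊆ R be a monomial ideal having a unique maximal associated prime (i.e., the set of associated primes of I has a greatest element under inclusion). Then for every positive integer m, the m-th symbolic power of I equals the ordinary power: I^{(m)} = I^m. -/
open MvPolynomial Pointwise

noncomputable section

/-- The contraction to `R` of the extension of `I ^ m` to the localization of `R` at the
prime ideal `P`, i.e. `R ∩ I^m R_P`. -/
def contractedPower {R : Type*} [CommRing R] (I : Ideal R) (m : ℕ)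
    (P : Ideal R) (hP : P.IsPrime) : Ideal R :=
  letI := hP
  (Ideal.map (algebraMap R (Localization.AtPrime P)) (I ^ m)).comap
    (algebraMap R (Localization.AtPrime P))

/-- `Q_{⊆ P} = R ∩ I R_P`, the contraction to `R` of the extension of `I` to `R_P`. -/
def Qsub {R : Type*} [CommRing R] (I P : Ideal R) (hP : P.IsPrime) : Ideal R :=
  letI := hP
  (Ideal.map (algebraMap R (Localization.AtPrime P)) I).comap
    (algebraMap R (Localization.AtPrime P))

/-- The `m`-th symbolic power `I^{(m)} = ⋂_{P ∈ Ass(I)} (R ∩ I^m R_P)`. -/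
def symbolicPower {R : Type*} [CommRing R] (I : Ideal R) (m : ℕ) : Ideal R :=
  ⨅ P : {P : Ideal R // P ∈ associatedPrimes R (R ⧸ I)},
    contractedPower I m P.1 P.2.isPrime

/-- The set of associated primes of `I` that are maximal with respect to inclusion. -/
def maxAss {R : Type*} [CommRing R] (I : Ideal R) : Set (Ideal R) :=
  {P | P ∈ associatedPrimes R (R ⧸ I) ∧
    ∀ P' ∈ associatedPrimes R (R ⧸ I), P ≤ P' → P = P'}

/-- A monomial ideal: an ideal generated by monomials. -/
def IsMonomialIdeal {k : Type*} [Field k] {n : ℕ}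
    (I : Ideal (MvPolynomial (Fin (n + 1)) k)) : Prop :=
  ∃ S : Set (Fin (n + 1) →₀ ℕ),
    I = Ideal.span ((fun a => (monomial a (1 : k) : MvPolynomial (Fin (n + 1)) k)) '' S)

/-- A square-free monomial ideal: an ideal generated by square-free monomials. -/
def IsSquarefreeMonomialIdeal {k : Type*} [Field k] {n : ℕ}
    (I : Ideal (MvPolynomial (Fin (n + 1)) k)) : Prop :=
  ∃ S : Set (Fin (n + 1) →₀ ℕ), (∀ a ∈ S, ∀ i, a i ≤ 1) ∧
    I = Ideal.span ((fun a => (monomial a (1 : k) : MvPolynomial (Fin (n + 1)) k)) '' S)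

/-- The height of a prime ideal. -/
def primeHeight {R : Type*} [CommRing R] (P : Ideal R) (hP : P.IsPrime) : ℕ∞ :=
  Order.height (⟨P, hP⟩ : PrimeSpectrum R)

/-- `e` is the big-height of `I`: the maximum of the heights of the associated primes of `I`. -/
def IsBigHeight {R : Type*} [CommRing R] (I : Ideal R) (e : ℕ) : Prop :=
  (∀ P, ∀ h : P ∈ associatedPrimes R (R ⧸ I), primeHeight P h.isPrime ≤ (e : ℕ∞)) ∧
    ∃ P, ∃ h : P ∈ associatedPrimes R (R ⧸ I), primeHeight P h.isPrime = (e : ℕ∞)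

/-- The irrelevant maximal ideal `𝔪 = (x_0, …, x_n)`. -/
def mId (k : Type*) [Field k] (n : ℕ) : Ideal (MvPolynomial (Fin (n + 1)) k) :=
  Ideal.span (Set.range X)

/-- The exponent vector of a monomial, viewed as a point of `ℝ^{n+1}`. -/
def expVec {n : ℕ} (a : Fin (n + 1) →₀ ℕ) : Fin (n + 1) → ℝ := fun i => (a i : ℝ)

/-- `L(J)`: the set of exponent vectors of the monomials lying in `J`. -/
def latticePoints {k : Type*} [Field k] {n : ℕ}
    (J : Ideal (MvPolynomial (Fin (n + 1)) k)) : Set (Fin (n + 1) → ℝ) :=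
  {v | ∃ a : Fin (n + 1) →₀ ℕ, monomial a (1 : k) ∈ J ∧ v = expVec a}

/-- The exponent vectors of the minimal monomial generators of a monomial ideal. -/
def minGens {k : Type*} [Field k] {n : ℕ}
    (J : Ideal (MvPolynomial (Fin (n + 1)) k)) : Set (Fin (n + 1) →₀ ℕ) :=
  {a | monomial a (1 : k) ∈ J ∧
    ∀ b : Fin (n + 1) →₀ ℕ, monomial b (1 : k) ∈ J → b ≤ a → b = a}

/-- The symbolic polyhedron `𝒬 = ⋂_{P ∈ maxAss(I)} conv(L(Q_{⊆P}))`. -/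
def symbolicPolyhedron {k : Type*} [Field k] {n : ℕ}
    (I : Ideal (MvPolynomial (Fin (n + 1)) k)) : Set (Fin (n + 1) → ℝ) :=
  ⋂ P : {P : Ideal (MvPolynomial (Fin (n + 1)) k) // P ∈ maxAss I},
    convexHull ℝ (latticePoints (Qsub I P.1 P.2.1.isPrime))

/-- `α(J)`: the least degree of a nonzero (homogeneous) element of `J`. -/
def alphaI {k : Type*} [Field k] {n : ℕ}
    (J : Ideal (MvPolynomial (Fin (n + 1)) k)) : ℕ :=
  sInf {d | ∃ f ∈ J, f ≠ 0 ∧ MvPolynomial.IsHomogeneous f d}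

/-- `β(J)`: the largest degree of a minimal generator of the monomial ideal `J`. -/
def betaI {k : Type*} [Field k] {n : ℕ}
    (J : Ideal (MvPolynomial (Fin (n + 1)) k)) : ℕ :=
  sSup {d | ∃ a ∈ minGens J, ∑ i, a i = d}

/-- `α(𝒫) = inf { a_0 + ⋯ + a_n : a ∈ 𝒫 }` for a subset `𝒫 ⊆ ℝ^{n+1}`. -/
def alphaSet {n : ℕ} (P : Set (Fin (n + 1) → ℝ)) : ℝ :=
  sInf ((fun v => ∑ i, v i) '' P)

/-- The set of all conical (nonnegative) combinations of elements of `S`. -/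
def conicalHull {E : Type*} [AddCommMonoid E] [Module ℝ E] (S : Set E) : Set E :=
  {x | ∃ (t : Finset E) (c : E → ℝ), ↑t ⊆ S ∧ (∀ y, 0 ≤ c y) ∧ x = ∑ y ∈ t, c y • y}

/-- The staircase of a monomial ideal `J`. -/
def stairs {k : Type*} [Field k] {n : ℕ}
    (J : Ideal (MvPolynomial (Fin (n + 1)) k)) : Set (Fin (n + 1) → ℝ) :=
  {v | (∀ i, 0 ≤ v i) ∧
    ∃ a : Fin (n + 1) →₀ ℕ, monomial a (1 : k) ∈ J ∧ ∀ i, (a i : ℝ) ≤ v i}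

end


/-! Let `P` be the greatest associated prime of `I` and `T` the set of variables lying in `P`.
Elements outside `P` are nonzerodivisors modulo `I`, so erasing the variables outside `T` from a
monomial generator keeps it in `I`: thus `I`, and with it `I ^ m`, is generated by monomials in
the variables of `T`. Modulo such a monomial ideal `J`, every `s ∉ (x_i : i ∈ T)` is a
nonzerodivisor: if `s * f ∈ J` but `f ∉ J`, pair a monomial of `s` free of `T` with a monomial of
`f` outside `J` so that their sum is attained only once (`UniqueSums`); its coefficient in `s * f`
is then a nonzero product, yet the sum lies outside `J`. Hence `R ∩ I ^ m R_P = I ^ m`. -/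
theorem UniqueSums.exists_uniqueAdd_weight_le {M N : Type*} [AddCommMonoid M] [UniqueSums M]
    [AddCommMonoid N] [LinearOrder N] [IsOrderedCancelAddMonoid N] (w : M →+ N)
    {A B : Finset M} (hA : A.Nonempty) (hB : B.Nonempty) :
    ∃ a₀ ∈ A, ∃ b₀ ∈ B, UniqueAdd A B a₀ b₀ ∧ ∀ a ∈ A, w a₀ ≤ w a := by
  classical
  obtain ⟨a₁, ha₁, ha₁min⟩ := A.exists_min_image w hA
  obtain ⟨b₁, hb₁, hb₁min⟩ := B.exists_min_image w hB
  obtain ⟨a₀, ha₀, b₀, hb₀, huniq⟩ := UniqueSums.uniqueAdd_of_nonempty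
    (A := A.filter (w · = w a₁)) (B := B.filter (w · = w b₁))
    ⟨a₁, Finset.mem_filter.2 ⟨ha₁, rfl⟩⟩ ⟨b₁, Finset.mem_filter.2 ⟨hb₁, rfl⟩⟩
  rw [Finset.mem_filter] at ha₀ hb₀
  refine ⟨a₀, ha₀.1, b₀, hb₀.1, fun a b ha hb hab => ?_, ha₀.2 ▸ ha₁min⟩
  obtain ⟨hwa, hwb⟩ := (add_eq_add_iff_eq_and_eq (ha₁min a ha) (hb₁min b hb)).1 <| by
    rw [← ha₀.2, ← hb₀.2, ← map_add, ← map_add, hab]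
  exact huniq (Finset.mem_filter.2 ⟨ha, hwa.symm⟩) (Finset.mem_filter.2 ⟨hb, hwb.symm⟩) hab


namespace MvPolynomial

variable {σ R : Type*} [CommSemiring R]

theorem span_monomial_mul_span_monomial (S₁ S₂ : Set (σ →₀ ℕ)) :
    Ideal.span ((fun a => monomial a (1 : R)) '' S₁) *
        Ideal.span ((fun a => monomial a (1 : R)) '' S₂) =
      Ideal.span ((fun a => monomial a (1 : R)) '' (S₁ + S₂)) := by
  rw [Ideal.span_mul_span']
  congr 1
  ext p
  simp only [Set.mem_mul, Set.mem_add, Set.mem_image]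
  constructor
  · rintro ⟨_, ⟨a, ha, rfl⟩, _, ⟨b, hb, rfl⟩, rfl⟩
    exact ⟨a + b, ⟨a, ha, b, hb, rfl⟩, by rw [monomial_mul, one_mul]⟩
  · rintro ⟨_, ⟨a, ha, b, hb, rfl⟩, rfl⟩
    exact ⟨_, ⟨a, ha, rfl⟩, _, ⟨b, hb, rfl⟩, by rw [monomial_mul, one_mul]⟩

theorem exists_subset_span_monomial_pow_eq {M : AddSubmonoid (σ →₀ ℕ)} {S : Set (σ →₀ ℕ)}
    (hS : S ⊆ M) (m : ℕ) :
    ∃ S' ⊆ (M : Set (σ →₀ ℕ)),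
      Ideal.span ((fun a => monomial a (1 : R)) '' S) ^ m =
        Ideal.span ((fun a => monomial a (1 : R)) '' S') := by
  induction m with
  | zero => exact ⟨{0}, by simp, by simp [monomial_zero']⟩
  | succ m ih =>
    obtain ⟨S', hS'M, hS'⟩ := ih
    exact ⟨S' + S, AddSubmonoid.add_subset hS'M hS,
      by rw [pow_succ, hS', span_monomial_mul_span_monomial]⟩

theorem le_of_le_add_of_supported {T : Set σ} {a ν μ : σ →₀ ℕ}
    (ha : a ∈ Finsupp.supported ℕ ℕ T) (hν : ∀ i ∈ T, ν i = 0) (h : a ≤ ν + μ) : a ≤ μ := by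
  intro i
  by_cases hi : i ∈ T
  · simpa [hν i hi] using h i
  · simp [Finsupp.notMem_support_iff.1 fun h => hi ((Finsupp.mem_supported _ _).1 ha h)]

theorem coeff_mul_add_of_uniqueAdd {p q : MvPolynomial σ R} {a b : σ →₀ ℕ}
    (h : UniqueAdd p.support q.support a b) : coeff (a + b) (p * q) = coeff a p * coeff b q :=
  AddMonoidAlgebra.coeff_mul_add_of_uniqueAdd h

theorem mem_span_monomial_of_mul_mem [NoZeroDivisors R] {T : Set σ} {S : Set (σ →₀ ℕ)}
    (hS : S ⊆ Finsupp.supported ℕ ℕ T) {s f : MvPolynomial σ R}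
    (hs : s ∉ Ideal.span (X '' T))
    (hsf : s * f ∈ Ideal.span ((fun a => monomial a (1 : R)) '' S)) :
    f ∈ Ideal.span ((fun a => monomial a (1 : R)) '' S) := by
  classical
  simp only [mem_ideal_span_monomial_image, ← mem_upperClosure] at hsf ⊢
  rw [mem_ideal_span_X_image] at hs
  push Not at hs
  obtain ⟨ν, hν, hνT⟩ := hs
  by_contra! ⟨μ, hμ, hμS⟩
  let degT : (σ →₀ ℕ) →+ ℕ := Finsupp.degree.comp (Finsupp.filterAddHom (· ∈ T))
  have hdegT (ν : σ →₀ ℕ) : degT ν = 0 ↔ ∀ i ∈ T, ν i = 0 := by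
    simp only [degT, AddMonoidHom.comp_apply, Finsupp.degree_eq_zero_iff]
    exact Finsupp.filter_eq_zero_iff _ _
  -- `a₀` minimises the `T`-degree on `s.support`, where `ν` has `T`-degree `0`
  obtain ⟨a₀, ha₀, b₀, hb₀, huniq, ha₀min⟩ := UniqueSums.exists_uniqueAdd_weight_le degT
    (B := f.support.filter (· ∉ upperClosure S)) ⟨ν, hν⟩ ⟨μ, Finset.mem_filter.2 ⟨hμ, hμS⟩⟩
  rw [Finset.mem_filter] at hb₀
  have ha₀T : ∀ i ∈ T, a₀ i = 0 :=
    (hdegT a₀).1 (Nat.le_zero.1 ((hdegT ν).2 hνT ▸ ha₀min ν hν))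
  have hsum : a₀ + b₀ ∉ upperClosure S := by
    rintro ⟨a, haS, hle⟩
    exact hb₀.2 ⟨a, haS, le_of_le_add_of_supported (hS haS) ha₀T hle⟩
  have hu : UniqueAdd s.support f.support a₀ b₀ := fun ν' μ' hν' hμ' h =>
    huniq hν' (Finset.mem_filter.2 ⟨hμ', fun hμ'S =>
      hsum (h ▸ (upperClosure S).upper le_add_self hμ'S)⟩) h
  refine hsum (hsf _ (mem_support_iff.2 ?_))
  rw [coeff_mul_add_of_uniqueAdd hu]
  exact mul_ne_zero (mem_support_iff.1 ha₀) (mem_support_iff.1 hb₀.1)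

theorem monomial_one_notMem_of_forall_X_notMem {P : Ideal (MvPolynomial σ R)} [P.IsPrime]
    {ν : σ →₀ ℕ} (h : ∀ i ∈ ν.support, X i ∉ P) : monomial ν (1 : R) ∉ P := by
  rw [← prod_X_pow_eq_monomial, Ideal.IsPrime.prod_mem_iff]
  rintro ⟨i, hi, hiP⟩
  exact h i hi (Ideal.IsPrime.mem_of_pow_mem ‹_› _ hiP)

theorem exists_supported_span_monomial_eq {I P : Ideal (MvPolynomial σ R)} [P.IsPrime]
    (hreg : ∀ u ∉ P, ∀ f, u * f ∈ I → f ∈ I) {S : Set (σ →₀ ℕ)}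
    (hI : I = Ideal.span ((fun a => monomial a (1 : R)) '' S)) :
    ∃ S' ⊆ (Finsupp.supported ℕ ℕ {i | X i ∈ P} : Set (σ →₀ ℕ)),
      I = Ideal.span ((fun a => monomial a (1 : R)) '' S') := by
  classical
  have hsplit (a : σ →₀ ℕ) : monomial a (1 : R) =
      monomial (a.filter (X · ∉ P)) 1 * monomial (a.filter (X · ∈ P)) 1 := by
    rw [monomial_mul, one_mul, add_comm, Finsupp.filter_add_filter_not]
  refine ⟨(fun a => a.filter (X · ∈ P)) '' S, ?_, le_antisymm ?_ ?_⟩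
  · rintro _ ⟨a, -, rfl⟩
    rw [SetLike.mem_coe, Finsupp.mem_supported, Finsupp.support_filter]
    intro i hi
    exact (Finset.mem_filter.1 hi).2
  · rw [hI, Ideal.span_le]
    rintro _ ⟨a, ha, rfl⟩
    dsimp only
    rw [hsplit]
    exact Ideal.mul_mem_left _ _ (Ideal.subset_span ⟨_, ⟨a, ha, rfl⟩, rfl⟩)
  · rw [Ideal.span_le]
    rintro _ ⟨_, ⟨a, ha, rfl⟩, rfl⟩
    refine hreg (monomial (a.filter (X · ∉ P)) 1)
      (monomial_one_notMem_of_forall_X_notMem fun i hi => ?_) _ ?_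
    · rw [Finsupp.support_filter] at hi
      exact (Finset.mem_filter.1 hi).2
    · rw [← hsplit, hI]
      exact Ideal.subset_span ⟨a, ha, rfl⟩

end MvPolynomial

theorem Ideal.mem_of_mul_mem_of_forall_associatedPrimes_le {R : Type*} [CommRing R]
    [IsNoetherianRing R] {I P : Ideal R} (hP : ∀ Q ∈ associatedPrimes R (R ⧸ I), Q ≤ P)
    {s f : R} (hs : s ∉ P) (hsf : s * f ∈ I) : f ∈ I := by
  have hreg : IsSMulRegular (R ⧸ I) s := by
    by_contra h
    replace h : s ∈ {r : R | IsSMulRegular (R ⧸ I) r}ᶜ := h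
    rw [← biUnion_associatedPrimes_eq_compl_regular] at h
    obtain ⟨Q, hQ, hsQ⟩ := Set.mem_iUnion₂.1 h
    exact hs (hP Q hQ hsQ)
  rw [← Ideal.Quotient.eq_zero_iff_mem] at hsf ⊢
  exact hreg.right_eq_zero_of_smul hsf

theorem mem_contractedPower_iff {R : Type*} [CommRing R] {I P : Ideal R} (hP : P.IsPrime)
    {m : ℕ} {f : R} : f ∈ contractedPower I m P hP ↔ ∃ s ∉ P, s * f ∈ I ^ m :=
  IsLocalization.algebraMap_mem_map_algebraMap_iff P.primeCompl _ _ _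

theorem symbolic_power_eq_pow_of_unique_maximal_ass_general {k : Type*} [Field k] {n : ℕ}
    (I : Ideal (MvPolynomial (Fin (n + 1)) k)) (hmon : IsMonomialIdeal I)
    (huniq : ∃ P ∈ associatedPrimes (MvPolynomial (Fin (n + 1)) k)
        (MvPolynomial (Fin (n + 1)) k ⧸ I),
      ∀ P' ∈ associatedPrimes (MvPolynomial (Fin (n + 1)) k)
        (MvPolynomial (Fin (n + 1)) k ⧸ I), P' ≤ P)
    (m : ℕ) :
    symbolicPower I m = I ^ m := by
  obtain ⟨S, hI⟩ := hmon
  obtain ⟨P, hPass, hPmax⟩ := huniq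
  have := hPass.isPrime
  obtain ⟨S', hS', hIS'⟩ := exists_supported_span_monomial_eq
    (fun _ hu _ => Ideal.mem_of_mul_mem_of_forall_associatedPrimes_le hPmax hu) hI
  obtain ⟨Sₘ, hSₘ, hIₘ⟩ := exists_subset_span_monomial_pow_eq (R := k)
    (M := (Finsupp.supported ℕ ℕ _).toAddSubmonoid) hS' m
  have hXP : Ideal.span (X '' {i | X i ∈ P}) ≤ P :=
    Ideal.span_le.2 (Set.image_subset_iff.2 fun _ => id)
  refine le_antisymm ((iInf_le _ ⟨P, hPass⟩).trans fun f hf => ?_) fun f hf => ?_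
  · obtain ⟨s, hs, hsf⟩ := (mem_contractedPower_iff _).1 hf
    rw [hIS', hIₘ] at hsf ⊢
    exact mem_span_monomial_of_mul_mem hSₘ (fun h => hs (hXP h)) hsf
  · exact Submodule.mem_iInf _ |>.2 fun _ => Ideal.le_comap_map hf

theorem symbolic_power_eq_pow_of_unique_maximal_ass {k : Type*} [Field k] {n : ℕ}
    (I : Ideal (MvPolynomial (Fin (n + 1)) k)) (hmon : IsMonomialIdeal I)
    (huniq : ∃ P ∈ associatedPrimes (MvPolynomial (Fin (n + 1)) k)
        (MvPolynomial (Fin (n + 1)) k ⧸ I),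
      ∀ P' ∈ associatedPrimes (MvPolynomial (Fin (n + 1)) k)
        (MvPolynomial (Fin (n + 1)) k ⧸ I), P' ≤ P)
    (m : ℕ) (hm : 1 ≤ m) :
    symbolicPower I m = I ^ m :=
  symbolic_power_eq_pow_of_unique_maximal_ass_general I hmon huniq m
end

section
/- Let R = k[x_0,…,x_n] be a polynomial ring over a field k, let I ⊆ R be a monomial ideal with primary decomposition I = Q_1 ∩ ⋯ ∩ Q_k into primary monomial ideals, and let P be an associated prime of I. Let Q_{⊆P} be the intersection of all Q_i with √(Q_i) ⊆ P. Then for all positive integers m, Q_{⊆P}^m = R ∩ I^m R_P, i.e., the m-th power of Q_{⊆P} equals the contraction to R of the extension of I^m to the localization R_P. -/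
open MvPolynomial Pointwise

/-! Let `W` be the set of variables lying in `P`. If a monomial lies in a primary `Q i` with
`√(Q i) ⊆ P`, dropping its variables outside `W` leaves a monomial still in `Q i`, since the part
dropped avoids the prime `√(Q i)`. So `J`, the intersection of these `Q i`, and all its powers are
generated by monomials in the variables of `W`. Each remaining `Q i` contains an element outside
`P`, so `I` and `J` have the same extension to `R_P`, and it remains to see that an ideal `K`
generated by monomials in `W` is saturated with respect to every `t ∉ (X j : j ∈ W)`. Substituting
`X j ↦ T * X j` for `j ∈ W` sends `K` into `K[T]`. The constant coefficient of the image of `t` is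
`t` with the `W`-variables set to `0`: it is nonzero and, its monomials avoiding `W`, a
nonzerodivisor modulo `K`. So if `t * x ∈ K`, induction on the `T`-degree puts every coefficient
of the image of `x` into `K`, and evaluating at `T = 1` gives `x ∈ K`. -/

theorem Polynomial.mem_map_C_of_mul_mem {A : Type*} [CommRing A] {K : Ideal A}
    {q p : Polynomial A} (hq : ∀ y, q.coeff 0 * y ∈ K → y ∈ K)
    (hqp : q * p ∈ K.map Polynomial.C) : p ∈ K.map Polynomial.C := by
  rw [Ideal.mem_map_C_iff] at hqp ⊢
  intro n
  induction n using Nat.strong_induction_on with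
  | _ n ih =>
    have h0n : ((0 : ℕ), n) ∈ Finset.HasAntidiagonal.antidiagonal n :=
      Finset.HasAntidiagonal.mem_antidiagonal.mpr (zero_add n)
    have hsplit := Finset.add_sum_erase _ (fun ij => q.coeff ij.1 * p.coeff ij.2) h0n
    rw [← Polynomial.coeff_mul, ← eq_sub_iff_add_eq] at hsplit
    refine hq _ (hsplit ▸ K.sub_mem (hqp n) (K.sum_mem fun ij hij => K.mul_mem_left _ (ih _ ?_)))
    obtain ⟨hij, hsum⟩ := Finset.mem_erase.mp hij
    rw [Finset.HasAntidiagonal.mem_antidiagonal] at hsum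
    by_contra! h
    exact hij (Prod.ext (by omega) (by omega))

theorem Ideal.exists_notMem_forall_mul_mem_iInf {R ι : Type*} [CommRing R] [Finite ι]
    {P : Ideal R} (hP : P.IsPrime) (Q : ι → Ideal R) :
    ∃ t ∉ P, ∀ x ∈ ⨅ i : {i // (Q i).radical ≤ P}, Q i.1, t * x ∈ ⨅ i, Q i := by
  have : ∀ i : {i // ¬ (Q i).radical ≤ P}, ∃ c ∈ Q i.1, c ∉ P := fun i =>
    Set.not_subset.mp (hP.radical_le_iff.not.mp i.2)
  choose c hcQ hcP using this
  have := Fintype.ofFinite {i // ¬ (Q i).radical ≤ P}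
  refine ⟨∏ i, c i, P.primeCompl.prod_mem fun i _ => hcP i, fun x hx => ?_⟩
  refine Ideal.mem_iInf.mpr fun i => ?_
  by_cases hi : (Q i).radical ≤ P
  · exact Ideal.mul_mem_left _ _ (Ideal.mem_iInf.mp hx ⟨i, hi⟩)
  · exact Ideal.mul_mem_right _ _
      (Ideal.mem_of_dvd _ (Finset.dvd_prod_of_mem c (Finset.mem_univ ⟨i, hi⟩)) (hcQ ⟨i, hi⟩))

theorem IsLocalization.map_algebraMap_eq_of_mul_mem {R : Type*} [CommRing R] (M : Submonoid R)
    (S : Type*) [CommRing S] [Algebra R S] [IsLocalization M S] {I J : Ideal R} (hIJ : I ≤ J)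
    {t : R} (ht : t ∈ M) (htJ : ∀ x ∈ J, t * x ∈ I) :
    I.map (algebraMap R S) = J.map (algebraMap R S) :=
  le_antisymm (Ideal.map_mono hIJ) <| Ideal.map_le_iff_le_comap.mpr fun x hx =>
    (IsLocalization.algebraMap_mem_map_algebraMap_iff M S I x).mpr ⟨t, ht, htJ x hx⟩

namespace MvPolynomial

variable {σ k : Type*} [CommRing k]

theorem monomial_mem_of_mem_support {S : Set (σ →₀ ℕ)} {f : MvPolynomial σ k}
    (hf : f ∈ Ideal.span ((monomial · 1) '' S)) {a : σ →₀ ℕ} (ha : a ∈ f.support) :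
    monomial a 1 ∈ Ideal.span ((monomial · (1 : k)) '' S) := by
  obtain ⟨s, hs, hsa⟩ := mem_ideal_span_monomial_image.mp hf a ha
  have : monomial a (1 : k) = monomial (a - s) 1 * monomial s 1 := by
    rw [monomial_mul, one_mul, tsub_add_cancel_of_le hsa]
  rw [this]
  exact Ideal.mul_mem_left _ _ (Ideal.subset_span ⟨s, hs, rfl⟩)

theorem monomial_mem_of_add_mem_of_isPrimary {Q : Ideal (MvPolynomial σ k)} (hQ : Q.IsPrimary)
    {b c : σ →₀ ℕ} (hc : ∀ j ∈ c.support, X j ∉ Q.radical)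
    (hbc : monomial (b + c) (1 : k) ∈ Q) : monomial b (1 : k) ∈ Q := by
  have := Ideal.isPrime_radical hQ
  rw [← mul_one (1 : k), ← monomial_mul] at hbc
  refine ((Ideal.isPrimary_iff.mp hQ).2 hbc).resolve_right ?_
  rw [← prod_X_pow_eq_monomial]
  exact Q.radical.primeCompl.prod_mem fun j hj => Q.radical.primeCompl.pow_mem (hc j hj) _

def IsMonomialIdealIn (W : Set σ) (K : Ideal (MvPolynomial σ k)) : Prop :=
  ∃ S : Set (σ →₀ ℕ), (∀ a ∈ S, ↑a.support ⊆ W) ∧ K = Ideal.span ((monomial · 1) '' S)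

section Substitutions

variable (W : Set σ)

noncomputable def killVars : MvPolynomial σ k →ₐ[k] MvPolynomial σ k :=
  aeval (Wᶜ.indicator X)

noncomputable def scaleVars : MvPolynomial σ k →ₐ[k] Polynomial (MvPolynomial σ k) :=
  aeval fun j => Polynomial.C (X j) * Polynomial.X ^ W.indicator 1 j

theorem killVars_sub_mem_span_X (p : MvPolynomial σ k) :
    killVars W p - p ∈ Ideal.span (X '' W : Set (MvPolynomial σ k)) := by
  rw [← Ideal.Quotient.eq]
  have : (Ideal.Quotient.mkₐ k (Ideal.span (X '' W : Set (MvPolynomial σ k)))).comp (killVars W) =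
      Ideal.Quotient.mkₐ k _ :=
    algHom_ext fun j => by
      by_cases hj : j ∈ W
      · simpa [killVars, hj] using
          (Ideal.Quotient.eq_zero_iff_mem.mpr
            (Ideal.subset_span (Set.mem_image_of_mem (X : σ → MvPolynomial σ k) hj))).symm
      · simp [killVars, hj]
  exact DFunLike.congr_fun this p

theorem notMem_of_mem_vars_killVars (p : MvPolynomial σ k) {j : σ}
    (hj : j ∈ (killVars W p).vars) : j ∉ W := by
  rw [killVars, aeval_eq_bind₁] at hj
  obtain ⟨i, -, hi⟩ := mem_vars_bind₁ _ _ hj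
  by_cases hiW : i ∈ W
  · simp [hiW] at hi
  · rw [Set.indicator_of_mem (Set.mem_compl hiW), X, mem_vars_iff_mem_support] at hi
    obtain ⟨d, hd, hjd⟩ := hi
    rw [Finset.mem_singleton.mp (support_monomial_subset hd)] at hjd
    rwa [Finset.mem_singleton.mp (Finsupp.support_single_subset hjd)]

theorem eval_one_scaleVars (p : MvPolynomial σ k) : (scaleVars W p).eval 1 = p := by
  induction p using MvPolynomial.induction_on <;> simp_all [scaleVars]

theorem coeff_zero_scaleVars (p : MvPolynomial σ k) :
    (scaleVars W p).coeff 0 = killVars W p := by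
  induction p using MvPolynomial.induction_on with
  | C c => simp [scaleVars, killVars]
  | add p q hp hq => simp_all
  | mul_X p j hp => by_cases hj : j ∈ W <;> simp_all [scaleVars, killVars]

theorem scaleVars_monomial (a : σ →₀ ℕ) (c : k) :
    scaleVars W (monomial a c) =
      Polynomial.C (monomial a c) * Polynomial.X ^ ∑ j ∈ a.support, W.indicator 1 j * a j := by
  simp only [scaleVars, aeval_monomial, Finsupp.prod, mul_pow, Finset.prod_mul_distrib, ← pow_mul,
    Finset.prod_pow_eq_pow_sum, ← map_pow, ← map_prod, prod_X_pow_eq_monomial]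
  rw [← mul_assoc, Polynomial.algebraMap_apply, algebraMap_eq, ← Polynomial.C_mul, C_mul_monomial,
    mul_one]

end Substitutions

namespace IsMonomialIdealIn

variable {W : Set σ} {K L : Ideal (MvPolynomial σ k)}

theorem top : IsMonomialIdealIn W (⊤ : Ideal (MvPolynomial σ k)) :=
  ⟨{0}, by simp, by simp⟩

theorem mul (hK : IsMonomialIdealIn W K) (hL : IsMonomialIdealIn W L) :
    IsMonomialIdealIn W (K * L) := by
  obtain ⟨S, hS, rfl⟩ := hK
  obtain ⟨T, hT, rfl⟩ := hL
  refine ⟨S + T, ?_, ?_⟩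
  · classical
    rintro _ ⟨a, ha, b, hb, rfl⟩ j hj
    rcases Finset.mem_union.mp (Finsupp.support_add hj) with h | h
    exacts [hS a ha h, hT b hb h]
  · rw [Ideal.span_mul_span', ← Set.image2_mul, ← Set.image2_add, Set.image2_image_left,
      Set.image2_image_right, Set.image_image2]
    simp [monomial_mul]

theorem pow (hK : IsMonomialIdealIn W K) (m : ℕ) : IsMonomialIdealIn W (K ^ m) := by
  induction m with
  | zero => simpa using top
  | succ m ih => simpa [pow_succ] using ih.mul hK

theorem monomial_mem_of_add_mem [Nontrivial k] (hK : IsMonomialIdealIn W K)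
    {u v : σ →₀ ℕ} (hu : ∀ j ∈ W, u j = 0) (huv : monomial (u + v) (1 : k) ∈ K) :
    monomial v (1 : k) ∈ K := by
  classical
  obtain ⟨S, hS, rfl⟩ := hK
  have huv_supp : u + v ∈ (monomial (u + v) (1 : k)).support := by
    rw [mem_support_iff, coeff_monomial, if_pos rfl]
    exact one_ne_zero
  obtain ⟨s, hs, hsuv⟩ := mem_ideal_span_monomial_image.mp huv (u + v) huv_supp
  refine mem_ideal_span_monomial_image.mpr fun b hb => ⟨s, hs, ?_⟩
  rw [Finset.mem_singleton.mp (support_monomial_subset hb)]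
  intro j
  by_cases hj : j ∈ W
  · simpa [hu j hj] using hsuv j
  · simp [Finsupp.notMem_support_iff.mp fun h => hj (hS s hs h)]

theorem mem_of_mul_mem_of_disjoint_vars [IsDomain k] (hK : IsMonomialIdealIn W K)
    {t y : MvPolynomial σ k} (ht : t ≠ 0) (hvars : ∀ j ∈ t.vars, j ∉ W) (hty : t * y ∈ K) :
    y ∈ K := by
  classical
  obtain ⟨S, -, hKS⟩ := id hK
  by_contra hy
  let bad := fun a => monomial a (1 : k) ∉ K
  set y₂ := ∑ a ∈ y.support with bad a, monomial a (y.coeff a)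
  have hy₁ : y - y₂ ∈ K := by
    have : y - y₂ = ∑ a ∈ y.support with ¬ bad a, monomial a (y.coeff a) := by
      rw [sub_eq_iff_eq_add, add_comm, Finset.sum_filter_add_sum_filter_not,
        support_sum_monomial_coeff]
    rw [this]
    refine Ideal.sum_mem _ fun a ha => ?_
    rw [← mul_one (y.coeff a), ← C_mul_monomial]
    exact K.mul_mem_left _ (not_not.mp (Finset.mem_filter.mp ha).2)
  have hbad : ∀ a ∈ y₂.support, bad a := by
    intro a ha
    obtain ⟨b, hb, hab⟩ := Finset.mem_biUnion.mp (support_sum ha)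
    rw [Finset.mem_singleton.mp (support_monomial_subset hab)]
    exact (Finset.mem_filter.mp hb).2
  have hy₂ : y₂ ≠ 0 := fun h => hy (by simpa [h] using hy₁)
  have hty₂ : t * y₂ ∈ K := by
    simpa [mul_sub] using K.sub_mem hty (K.mul_mem_left t hy₁)
  obtain ⟨c, hc⟩ := support_nonempty.mpr (mul_ne_zero ht hy₂)
  obtain ⟨u, hu, v, hv, rfl⟩ := Finset.mem_add.mp (support_mul t y₂ hc)
  have hu : ∀ j ∈ W, u j = 0 := fun j hj => by
    by_contra h
    exact hvars j ((mem_vars_iff_mem_support j).mpr ⟨u, hu, Finsupp.mem_support_iff.mpr h⟩) hj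
  rw [hKS] at hty₂
  exact hbad v hv (hK.monomial_mem_of_add_mem hu (hKS ▸ monomial_mem_of_mem_support hty₂ hc))

theorem mem_of_mul_mem [IsDomain k] (hK : IsMonomialIdealIn W K) {t x : MvPolynomial σ k}
    (ht : t ∉ Ideal.span (X '' W : Set (MvPolynomial σ k))) (htx : t * x ∈ K) : x ∈ K := by
  have hscale : ∀ f ∈ K, scaleVars W f ∈ K.map Polynomial.C := by
    obtain ⟨S, -, hKS⟩ := id hK
    intro f hf
    rw [hKS] at hf
    refine (Ideal.span_le (I := (K.map Polynomial.C).comap (scaleVars W)).mpr ?_) hf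
    rintro _ ⟨a, ha, rfl⟩
    rw [SetLike.mem_coe, Ideal.mem_comap, scaleVars_monomial]
    exact Ideal.mul_mem_right _ _
      (Ideal.mem_map_of_mem _ (hKS ▸ Ideal.subset_span ⟨a, ha, rfl⟩))
  have ht₀ : killVars W t ≠ 0 := by
    intro h
    have := killVars_sub_mem_span_X W t
    rw [h, zero_sub, neg_mem_iff] at this
    exact ht this
  have hx : scaleVars W x ∈ K.map Polynomial.C := by
    refine Polynomial.mem_map_C_of_mul_mem (q := scaleVars W t) (fun y hy => ?_) ?_
    · rw [coeff_zero_scaleVars] at hy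
      exact hK.mem_of_mul_mem_of_disjoint_vars ht₀ (fun j => notMem_of_mem_vars_killVars W t) hy
    · rw [← map_mul]
      exact hscale _ htx
  have := Ideal.mem_map_of_mem (Polynomial.eval₂RingHom (RingHom.id _) 1) hx
  rwa [Ideal.map_map, Polynomial.eval₂RingHom_comp_C, Ideal.map_id, Polynomial.coe_eval₂RingHom,
    Polynomial.eval₂_id, eval_one_scaleVars] at this

theorem comap_map_of_disjoint [IsDomain k] (hK : IsMonomialIdealIn W K)
    (M : Submonoid (MvPolynomial σ k)) (S : Type*) [CommRing S] [Algebra (MvPolynomial σ k) S]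
    [IsLocalization M S] (hM : ∀ t ∈ M, t ∉ Ideal.span (X '' W : Set (MvPolynomial σ k))) :
    (K.map (algebraMap _ S)).comap (algebraMap _ S) = K := by
  refine le_antisymm (fun x hx => ?_) Ideal.le_comap_map
  obtain ⟨t, ht, htx⟩ := (IsLocalization.algebraMap_mem_map_algebraMap_iff M S K x).mp hx
  exact hK.mem_of_mul_mem (hM t ht) htx

end IsMonomialIdealIn

theorem isMonomialIdealIn_iInf_of_isPrimary {ι : Type*} {P : Ideal (MvPolynomial σ k)}
    {Q : ι → Ideal (MvPolynomial σ k)} (hprimary : ∀ i, (Q i).IsPrimary)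
    (hmon : ∀ i, ∃ S : Set (σ →₀ ℕ), Q i = Ideal.span ((monomial · (1 : k)) '' S))
    (hQP : ∀ i, (Q i).radical ≤ P) : IsMonomialIdealIn {j | X j ∈ P} (⨅ i, Q i) := by
  classical
  refine ⟨{a | ↑a.support ⊆ {j | X j ∈ P} ∧ monomial a 1 ∈ ⨅ i, Q i}, fun a ha => ha.1, ?_⟩
  refine le_antisymm (fun f hf => mem_ideal_span_monomial_image.mpr fun a ha => ?_)
    (Ideal.span_le.mpr fun _ ⟨a, ha, h⟩ => h ▸ ha.2)
  let b := a.filter (X · ∈ P)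
  let c := a.filter (X · ∉ P)
  have hbc : b + c = a := Finsupp.filter_add_filter_not a _
  refine ⟨b, ⟨fun j hj => (Finset.mem_filter.mp hj).2, Ideal.mem_iInf.mpr fun i => ?_⟩,
    hbc ▸ le_self_add⟩
  obtain ⟨S, hS⟩ := hmon i
  refine monomial_mem_of_add_mem_of_isPrimary (c := c) (hprimary i)
    (fun j hj hjQ => (Finset.mem_filter.mp hj).2 (hQP i hjQ)) (hbc ▸ ?_)
  have hfi := Ideal.mem_iInf.mp hf i
  rw [hS] at hfi ⊢
  exact monomial_mem_of_mem_support hfi ha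

end MvPolynomial

theorem QsubP_pow_eq_contraction_general {k : Type*} [Field k] {n : ℕ}
    (I : Ideal (MvPolynomial (Fin (n + 1)) k)) (s : ℕ)
    (Q : Fin s → Ideal (MvPolynomial (Fin (n + 1)) k))
    (hprimary : ∀ i, (Q i).IsPrimary) (hmonQ : ∀ i, IsMonomialIdeal (Q i))
    (hdecomp : I = ⨅ i, Q i)
    (P : Ideal (MvPolynomial (Fin (n + 1)) k)) (hPprime : P.IsPrime)
    (m : ℕ) :
    (⨅ i : {i : Fin s // (Q i).radical ≤ P}, Q i.1) ^ m = contractedPower I m P hPprime := by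
  set J := ⨅ i : {i : Fin s // (Q i).radical ≤ P}, Q i.1
  have hJ : IsMonomialIdealIn {j | X j ∈ P} J :=
    isMonomialIdealIn_iInf_of_isPrimary (fun i => hprimary i.1) (fun i => hmonQ i.1) (fun i => i.2)
  obtain ⟨t, htP, htJ⟩ := Ideal.exists_notMem_forall_mul_mem_iInf hPprime Q
  have hmap : I.map (algebraMap _ (Localization.AtPrime P)) = J.map (algebraMap _ _) :=
    IsLocalization.map_algebraMap_eq_of_mul_mem P.primeCompl _
      (hdecomp ▸ le_iInf fun i => iInf_le _ i.1) htP (hdecomp ▸ htJ)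
  have hM : ∀ u ∈ P.primeCompl, u ∉ Ideal.span (X '' {j | X j ∈ P}) := fun u hu h =>
    hu (Ideal.span_le.mpr (by rintro _ ⟨j, hj, rfl⟩; exact hj) h)
  rw [contractedPower, Ideal.map_pow, hmap, ← Ideal.map_pow,
    (hJ.pow m).comap_map_of_disjoint _ _ hM]

theorem QsubP_pow_eq_contraction {k : Type*} [Field k] {n : ℕ}
    (I : Ideal (MvPolynomial (Fin (n + 1)) k)) (hmon : IsMonomialIdeal I) (s : ℕ)
    (Q : Fin s → Ideal (MvPolynomial (Fin (n + 1)) k))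
    (hprimary : ∀ i, (Q i).IsPrimary) (hmonQ : ∀ i, IsMonomialIdeal (Q i))
    (hdecomp : I = ⨅ i, Q i)
    (P : Ideal (MvPolynomial (Fin (n + 1)) k)) (hPprime : P.IsPrime)
    (hP : P ∈ associatedPrimes (MvPolynomial (Fin (n + 1)) k)
      (MvPolynomial (Fin (n + 1)) k ⧸ I))
    (m : ℕ) (hm : 1 ≤ m) :
    (⨅ i : {i : Fin s // (Q i).radical ≤ P}, Q i.1) ^ m = contractedPower I m P hPprime :=
  QsubP_pow_eq_contraction_general I s Q hprimary hmonQ hdecomp P hPprime m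
end

section
/- Let 𝒫 = Q + C ⊆ ℝ^m be a polyhedron, where Q is a polytope with finite vertex set V and C is the recession cone of 𝒫, generated as a cone by a finite set of rays. If C ≠ {0}, then every point of 𝒫 can be expressed as the sum of a convex combination of at most m vertices of Q and a conical combination (nonnegative linear combination) of the rays of C. -/
open MvPolynomial Pointwise

/-! By Carathéodory, a point `q` of `conv V` lies in the convex hull of affinely independent
vertices, at most `m + 1` of them. If there are exactly `m + 1`, they affinely span `ℝ^m`, so a
nonzero ray `r` of the cone is an affine dependence `∑ d_y y` with `∑ d_y = 0`. Moving `q` along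
`-r` until the first barycentric coordinate vanishes (the ratio test) drops a vertex, and the
displacement `t • r` is absorbed into the cone. -/

open Finset

theorem Finset.exists_sum_eq_zero_sum_smul_eq_of_mem_vectorSpan {k E : Type*} [Ring k]
    [AddCommGroup E] [Module k E] {T : Finset E} {r : E} (hr : r ∈ vectorSpan k (T : Set E)) :
    ∃ d : E → k, ∑ y ∈ T, d y = 0 ∧ ∑ y ∈ T, d y • y = r := by
  classical
  rw [vectorSpan_def] at hr
  induction hr using Submodule.span_induction with
  | mem v hv =>
    obtain ⟨a, ha, b, hb, rfl⟩ := hv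
    rw [mem_coe] at ha hb
    refine ⟨Pi.single a 1 - Pi.single b 1, ?_, ?_⟩
    · simp [sum_sub_distrib, Pi.single_apply, ha, hb]
    · simp [sub_smul, sum_sub_distrib, Pi.single_apply, ite_smul, ha, hb]
  | zero => exact ⟨0, by simp, by simp⟩
  | add u v _ _ hu hv =>
    obtain ⟨d₁, hd₁, rfl⟩ := hu
    obtain ⟨d₂, hd₂, rfl⟩ := hv
    exact ⟨d₁ + d₂, by simp [sum_add_distrib, hd₁, hd₂], by simp [add_smul, sum_add_distrib]⟩
  | smul a v _ hv =>
    obtain ⟨d, hd, rfl⟩ := hv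
    exact ⟨a • d, by simp [← mul_sum, hd], by simp [smul_sum, smul_smul]⟩

section

variable {𝕜 E : Type*} [Field 𝕜] [LinearOrder 𝕜] [IsStrictOrderedRing 𝕜]
  [AddCommGroup E] [Module 𝕜 E]

theorem Finset.exists_nonneg_sub_mul_eq_zero {ι : Type*} {s : Finset ι} {w d : ι → 𝕜}
    (hw : ∀ i ∈ s, 0 ≤ w i) (hd : ∃ i ∈ s, 0 < d i) :
    ∃ i₀ ∈ s, ∃ t : 𝕜, 0 ≤ t ∧ (∀ i ∈ s, 0 ≤ w i - t * d i) ∧ w i₀ - t * d i₀ = 0 := by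
  classical
  obtain ⟨i₀, hi₀, hmin⟩ := (s.filter fun i => 0 < d i).exists_min_image (fun i => w i / d i)
    (by simpa [Finset.Nonempty] using hd)
  rw [mem_filter] at hi₀
  have ht : 0 ≤ w i₀ / d i₀ := div_nonneg (hw _ hi₀.1) hi₀.2.le
  refine ⟨i₀, hi₀.1, w i₀ / d i₀, ht, fun i hi => ?_, ?_⟩
  · rcases lt_or_ge 0 (d i) with hdi | hdi
    · rw [sub_nonneg, ← le_div_iff₀ hdi]
      exact hmin i (mem_filter.mpr ⟨hi, hdi⟩)
    · exact sub_nonneg.mpr ((mul_nonpos_of_nonneg_of_nonpos ht hdi).trans (hw i hi))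
  · rw [div_mul_cancel₀ _ hi₀.2.ne', sub_self]

theorem Finset.exists_sub_smul_mem_convexHull_erase [DecidableEq E] {T : Finset E} {x r : E}
    (hx : x ∈ convexHull 𝕜 (T : Set E)) (hr : r ∈ vectorSpan 𝕜 (T : Set E)) (hr0 : r ≠ 0) :
    ∃ y ∈ T, ∃ t : 𝕜, 0 ≤ t ∧ x - t • r ∈ convexHull 𝕜 (T.erase y : Set E) := by
  obtain ⟨w, hw0, hw1, rfl⟩ := mem_convexHull'.mp hx
  obtain ⟨d, hd0, rfl⟩ := exists_sum_eq_zero_sum_smul_eq_of_mem_vectorSpan hr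
  have hdpos : ∃ y ∈ T, 0 < d y := by
    by_contra! hd
    refine hr0 (sum_eq_zero fun y hy => ?_)
    rw [(sum_eq_zero_iff_of_nonpos hd).mp hd0 y hy, zero_smul]
  obtain ⟨y₀, hy₀, t, ht, hW0, hWy₀⟩ := exists_nonneg_sub_mul_eq_zero hw0 hdpos
  refine ⟨y₀, hy₀, t, ht, mem_convexHull'.mpr ⟨fun y => w y - t * d y,
    fun y hy => hW0 y (mem_of_mem_erase hy), ?_, ?_⟩⟩
  · rw [sum_erase (f := fun y => w y - t * d y) T hWy₀, sum_sub_distrib, ← mul_sum, hd0, hw1,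
      mul_zero, sub_zero]
  · rw [sum_erase (f := fun y => (w y - t * d y) • y) T (by rw [hWy₀, zero_smul])]
    simp only [sub_smul, mul_smul, sum_sub_distrib, smul_sum]

theorem exists_subset_card_le_finrank_sub_smul_mem_convexHull [FiniteDimensional 𝕜 E]
    {V : Set E} {x r : E} (hx : x ∈ convexHull 𝕜 V) (hr : r ≠ 0) :
    ∃ T : Finset E, ↑T ⊆ V ∧ T.card ≤ Module.finrank 𝕜 E ∧
      ∃ t : 𝕜, 0 ≤ t ∧ x - t • r ∈ convexHull 𝕜 (T : Set E) := by
  classical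
  rw [convexHull_eq_union] at hx
  simp only [Set.mem_iUnion] at hx
  obtain ⟨T, hTV, hT, hxT⟩ := hx
  have hcard : T.card ≤ Module.finrank 𝕜 E + 1 := by
    simpa using hT.card_le_finrank_succ.trans (by gcongr; exact Submodule.finrank_le _)
  rcases hcard.lt_or_eq with hlt | heq
  · exact ⟨T, hTV, Nat.lt_succ_iff.mp hlt, 0, le_rfl, by simpa using hxT⟩
  have hspan : vectorSpan 𝕜 (T : Set E) = ⊤ := by
    simpa using hT.vectorSpan_eq_top_of_card_eq_finrank_add_one (by simpa using heq)
  obtain ⟨y, hy, t, ht, hxt⟩ :=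
    T.exists_sub_smul_mem_convexHull_erase hxT (hspan ▸ Submodule.mem_top) hr
  exact ⟨T.erase y, (coe_subset.mpr (erase_subset y T)).trans hTV,
    by rw [card_erase_of_mem hy, heq, Nat.add_sub_cancel], t, ht, hxt⟩

end

theorem conicalHull_eq_hull {E : Type*} [AddCommGroup E] [Module ℝ E] (s : Set E) :
    conicalHull s = (PointedCone.hull ℝ s : Set E) := by
  ext x
  constructor
  · rintro ⟨t, c, hts, hc, rfl⟩
    exact Submodule.sum_mem _ fun y hy =>
      Submodule.smul_mem _ ⟨c y, hc y⟩ (PointedCone.subset_hull (hts hy))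
  · rintro hx
    obtain ⟨c, hcs, hc, rfl⟩ := PointedCone.mem_hull_set.mp hx
    exact ⟨c.support, c, hcs, hc, rfl⟩

theorem caratheodory_for_polyhedra_general (m : ℕ) (V S : Finset (Fin m → ℝ))
    (Q C P : Set (Fin m → ℝ))
    (hQ : Q = convexHull ℝ (V : Set (Fin m → ℝ)))
    (hC : C = conicalHull (S : Set (Fin m → ℝ)))
    (hP : P = Q + C)
    (hCne : C ≠ {0}) :
    ∀ p ∈ P, ∃ T : Finset (Fin m → ℝ), T ⊆ V ∧ T.card ≤ m ∧
      ∃ q ∈ convexHull ℝ (T : Set (Fin m → ℝ)), ∃ c ∈ C, p = q + c := by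
  rw [conicalHull_eq_hull] at hC
  subst hQ hC hP
  obtain ⟨r, hrC, hr0⟩ := (Submodule.ne_bot_iff (PointedCone.hull ℝ (S : Set (Fin m → ℝ)))).mp
    fun h => hCne (by rw [h, Submodule.bot_coe])
  rintro _ ⟨q, hq, c, hc, rfl⟩
  obtain ⟨T, hTV, hTcard, t, ht, hqt⟩ :=
    exists_subset_card_le_finrank_sub_smul_mem_convexHull hq hr0
  exact ⟨T, coe_subset.mp hTV, by simpa using hTcard, q - t • r, hqt, t • r + c,
    add_mem (PointedCone.smul_mem _ ht hrC) hc, by rw [← add_assoc, sub_add_cancel]⟩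

theorem caratheodory_for_polyhedra (m : ℕ) (V S : Finset (Fin m → ℝ))
    (Q C P : Set (Fin m → ℝ))
    (hQ : Q = convexHull ℝ (V : Set (Fin m → ℝ)))
    (hVmin : ∀ W : Finset (Fin m → ℝ), W ⊆ V →
      convexHull ℝ (W : Set (Fin m → ℝ)) = convexHull ℝ (V : Set (Fin m → ℝ)) → W = V)
    (hC : C = conicalHull (S : Set (Fin m → ℝ)))
    (hSmin : ∀ S' : Finset (Fin m → ℝ), S' ⊆ S →
      conicalHull (S' : Set (Fin m → ℝ)) = conicalHull (S : Set (Fin m → ℝ)) → S' = S)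
    (hP : P = Q + C)
    (hrec : C = {a | ∀ b ∈ P, ∀ l : ℝ, 0 ≤ l → b + l • a ∈ P})
    (hCne : C ≠ {0}) :
    ∀ p ∈ P, ∃ T : Finset (Fin m → ℝ), T ⊆ V ∧ T.card ≤ m ∧
      ∃ q ∈ convexHull ℝ (T : Set (Fin m → ℝ)), ∃ c ∈ C, p = q + c :=
  caratheodory_for_polyhedra_general m V S Q C P hQ hC hP hCne
end

section
/- Let R = k[x_0,…,x_n] be a polynomial ring over a field k, let I ⊆ R be a monomial ideal, and let 𝒬 ⊆ ℝ^{n+1} be the symbolic polyhedron of I. Then for every integer m ≥ 1, every exponent vector of a monomial in the m-th symbolic power I^{(m)} lies in the dilate m𝒬, i.e., L(I^{(m)}) ⊆ m𝒬. -/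
open MvPolynomial Pointwise

/-!
Let `I` be generated by the monomials `x^s`, `s ∈ S`, and let `x^a ∈ I^{(m)}`. For an associated
prime `P` there is `f ∉ P` with `f x^a ∈ I^m`; choose a term `x^b` of `f` outside `P`. Since `I^m`
is a monomial ideal, `a + b ≥ g₁ + ⋯ + gₘ` with all `gᵢ ∈ S`. Keeping only the variables lying in
`P` turns `gᵢ` into an exponent `qᵢ` with `x^{qᵢ} ∈ Q_{⊆P}` (the discarded factor is a unit in
`R_P`), and kills `b` because `x^b ∉ P`. Hence `q₁ + ⋯ + qₘ ≤ a`; enlarging one `qᵢ` writes `a` as a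
sum of `m` points of `L(Q_{⊆P})`, so `a / m ∈ conv L(Q_{⊆P})`.
-/

theorem Finsupp.filter_mono {α M : Type*} [Zero M] [Preorder M] (p : α → Prop) [DecidablePred p]
    {d e : α →₀ M} (hde : d ≤ e) : d.filter p ≤ e.filter p := fun j => by
  simp only [Finsupp.filter_apply]
  split_ifs
  exacts [hde j, le_rfl]

theorem exists_le_sum_eq {ι M : Type*} [Fintype ι] [DecidableEq ι] [AddCommMonoid M]
    [PartialOrder M] [CanonicallyOrderedAdd M] [Sub M] [OrderedSub M] (i₀ : ι) {q : ι → M} {a : M}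
    (h : ∑ i, q i ≤ a) : ∃ p : ι → M, q ≤ p ∧ ∑ i, p i = a :=
  ⟨q + Pi.single i₀ (a - ∑ i, q i), le_self_add, by
    simp [Finset.sum_add_distrib, add_tsub_cancel_of_le h]⟩

section Localization

variable {R : Type*} [CommRing R]

theorem mem_Qsub_iff {I P : Ideal R} (hP : P.IsPrime) {x : R} :
    x ∈ Qsub I P hP ↔ ∃ s ∉ P, s * x ∈ I :=
  letI := hP
  IsLocalization.algebraMap_mem_map_algebraMap_iff P.primeCompl (Localization.AtPrime P) I x

theorem contractedPower_eq_Qsub_pow (I : Ideal R) (m : ℕ) (P : Ideal R) (hP : P.IsPrime) :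
    contractedPower I m P hP = Qsub (I ^ m) P hP :=
  rfl

end Localization

section MonomialIdeal

variable {σ R : Type*} [CommRing R]

theorem monomial_one_mem_of_le {J : Ideal (MvPolynomial σ R)} {d e : σ →₀ ℕ}
    (hd : monomial d (1 : R) ∈ J) (hde : d ≤ e) : monomial e (1 : R) ∈ J :=
  J.mem_of_dvd (monomial_dvd_monomial.mpr ⟨Or.inr hde, dvd_rfl⟩) hd

theorem span_monomial_image_pow_le (S : Set (σ →₀ ℕ)) (m : ℕ) :
    Ideal.span ((fun a => monomial a (1 : R)) '' S) ^ m ≤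
      Ideal.span ((fun a => monomial a (1 : R)) ''
        {c | ∃ g : Fin m → σ →₀ ℕ, (∀ i, g i ∈ S) ∧ ∑ i, g i = c}) := by
  induction m with
  | zero =>
    rw [pow_zero, Ideal.one_eq_top, top_le_iff, Ideal.eq_top_iff_one]
    exact Ideal.subset_span ⟨0, ⟨Fin.elim0, fun i => i.elim0, by simp⟩, by simp⟩
  | succ m ih =>
    rw [pow_succ]
    refine (Ideal.mul_mono_left ih).trans ?_
    rw [Ideal.span_mul_span']
    refine Ideal.span_mono ?_
    rintro _ ⟨_, ⟨c, ⟨g, hg, rfl⟩, rfl⟩, _, ⟨s, hs, rfl⟩, rfl⟩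
    have hsnoc : ∀ i, Fin.snoc (α := fun _ => σ →₀ ℕ) g s i ∈ S :=
      fun i => Fin.lastCases (by simpa using hs) (fun j => by simpa using hg j) i
    refine ⟨_, ⟨_, hsnoc, rfl⟩, ?_⟩
    simp [Fin.sum_univ_castSucc, monomial_mul]

theorem exists_sum_le_of_mem_span_monomial_image_pow {S : Set (σ →₀ ℕ)} {m : ℕ}
    {f : MvPolynomial σ R} (hf : f ∈ Ideal.span ((fun a => monomial a (1 : R)) '' S) ^ m)
    {c : σ →₀ ℕ} (hc : c ∈ f.support) :
    ∃ g : Fin m → σ →₀ ℕ, (∀ i, g i ∈ S) ∧ ∑ i, g i ≤ c := by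
  obtain ⟨_, ⟨g, hg, rfl⟩, hle⟩ :=
    mem_ideal_span_monomial_image.mp (span_monomial_image_pow_le S m hf) c hc
  exact ⟨g, hg, hle⟩

theorem exists_mem_support_monomial_one_notMem {P : Ideal (MvPolynomial σ R)}
    {f : MvPolynomial σ R} (hf : f ∉ P) : ∃ b ∈ f.support, monomial b (1 : R) ∉ P := by
  contrapose! hf
  rw [f.as_sum]
  refine Ideal.sum_mem _ fun b hb => ?_
  rw [← mul_one (coeff b f), ← C_mul_monomial]
  exact P.mul_mem_left _ (hf b hb)

theorem monomial_one_mem_iff_of_isPrime {P : Ideal (MvPolynomial σ R)} [hP : P.IsPrime]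
    {e : σ →₀ ℕ} : monomial e (1 : R) ∈ P ↔ ∃ j ∈ e.support, X j ∈ P := by
  rw [monomial_eq, map_one, one_mul, Finsupp.prod, Ideal.IsPrime.prod_mem_iff]
  exact exists_congr fun j => and_congr_right fun hj =>
    hP.pow_mem_iff_mem _ (Nat.pos_of_ne_zero (Finsupp.mem_support_iff.mp hj))

variable {P : Ideal (MvPolynomial σ R)}

theorem filter_eq_zero_of_monomial_one_notMem [P.IsPrime] [DecidablePred (fun j => X j ∈ P)]
    {b : σ →₀ ℕ} (hb : monomial b (1 : R) ∉ P) : b.filter (fun j => X j ∈ P) = 0 := by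
  rw [Finsupp.filter_eq_zero_iff]
  intro j hj
  by_contra hbj
  exact hb (monomial_one_mem_iff_of_isPrime.mpr ⟨j, Finsupp.mem_support_iff.mpr hbj, hj⟩)

theorem monomial_one_filter_mem_Qsub [DecidablePred (fun j => X j ∈ P)]
    {I : Ideal (MvPolynomial σ R)} (hP : P.IsPrime)
    {e : σ →₀ ℕ} (he : monomial e (1 : R) ∈ I) :
    monomial (e.filter (fun j => X j ∈ P)) (1 : R) ∈ Qsub I P hP := by
  refine (mem_Qsub_iff hP).mpr ⟨monomial (e.filter (fun j => X j ∉ P)) 1, fun hmem => ?_, ?_⟩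
  · obtain ⟨j, hj, hjP⟩ := monomial_one_mem_iff_of_isPrime.mp hmem
    rw [Finsupp.support_filter, Finset.mem_filter] at hj
    exact hj.2 hjP
  · rwa [monomial_mul, mul_one, add_comm, Finsupp.filter_add_filter_not]

theorem exists_sum_le_of_monomial_one_mem_contractedPower {S : Set (σ →₀ ℕ)} (hP : P.IsPrime)
    {m : ℕ} {a : σ →₀ ℕ}
    (ha : monomial a (1 : R) ∈
      contractedPower (Ideal.span ((fun a => monomial a (1 : R)) '' S)) m P hP) :
    ∃ q : Fin m → σ →₀ ℕ,
      (∀ i, monomial (q i) (1 : R) ∈ Qsub (Ideal.span ((fun a => monomial a (1 : R)) '' S)) P hP)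
        ∧ ∑ i, q i ≤ a := by
  classical
  rw [contractedPower_eq_Qsub_pow, mem_Qsub_iff] at ha
  obtain ⟨f, hfP, hf⟩ := ha
  obtain ⟨b, hb, hbP⟩ := exists_mem_support_monomial_one_notMem hfP
  have hab : b + a ∈ (f * monomial a (1 : R)).support := by
    rwa [mem_support_iff, coeff_mul_monomial, mul_one, ← mem_support_iff]
  obtain ⟨g, hgS, hg⟩ := exists_sum_le_of_mem_span_monomial_image_pow hf hab
  refine ⟨fun i => (g i).filter (fun j => X j ∈ P),
    fun i => monomial_one_filter_mem_Qsub hP (Ideal.subset_span ⟨g i, hgS i, rfl⟩), ?_⟩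
  calc ∑ i, (g i).filter (fun j => X j ∈ P)
      = (∑ i, g i).filter (fun j => X j ∈ P) := (Finsupp.filter_sum _ _).symm
    _ ≤ (b + a).filter (fun j => X j ∈ P) := Finsupp.filter_mono _ hg
    _ = a.filter (fun j => X j ∈ P) := by
      rw [Finsupp.filter_add, filter_eq_zero_of_monomial_one_notMem hbP, zero_add]
    _ ≤ a := le_self_add.trans_eq (a.filter_add_filter_not _)

end MonomialIdeal

theorem inv_smul_expVec_sum_mem_convexHull {n m : ℕ} (hm : m ≠ 0) {T : Set (Fin (n + 1) → ℝ)}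
    {p : Fin m → Fin (n + 1) →₀ ℕ} (hp : ∀ i, expVec (p i) ∈ T) :
    (m : ℝ)⁻¹ • expVec (∑ i, p i) ∈ convexHull ℝ T := by
  have hcenter : (Finset.univ.centerMass (fun _ => (1 : ℝ)) fun i => expVec (p i)) =
      (m : ℝ)⁻¹ • expVec (∑ i, p i) := by
    ext j
    simp [Finset.centerMass, expVec]
  rw [← hcenter]
  exact Finset.univ.centerMass_mem_convexHull (fun _ _ => zero_le_one)
    (by simp [Nat.pos_of_ne_zero hm]) fun i _ => hp i

theorem lattice_points_symbolic_power_subset_dilate {k : Type*} [Field k] {n : ℕ}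
    (I : Ideal (MvPolynomial (Fin (n + 1)) k)) (hmon : IsMonomialIdeal I)
    (m : ℕ) (hm : 1 ≤ m) :
    latticePoints (symbolicPower I m) ⊆ (m : ℝ) • symbolicPolyhedron I := by
  obtain ⟨S, rfl⟩ := hmon
  rintro _ ⟨a, ha, rfl⟩
  rw [Set.mem_smul_set_iff_inv_smul_mem₀ (by positivity), symbolicPolyhedron, Set.mem_iInter]
  rintro ⟨P, hP, -⟩
  obtain ⟨q, hqQ, hq⟩ :=
    exists_sum_le_of_monomial_one_mem_contractedPower hP.isPrime (Ideal.mem_iInf.mp ha ⟨P, hP⟩)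
  obtain ⟨p, hqp, rfl⟩ := exists_le_sum_eq ⟨0, hm⟩ hq
  exact inv_smul_expVec_sum_mem_convexHull (by omega)
    fun i => ⟨p i, monomial_one_mem_of_le (hqQ i) (hqp i), rfl⟩
end
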